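/- arXiv:2105.06120 — 2 statements merged into one kernel-verified Lean document; each statement's English description precedes it below -/
import Mathlib

section
/- Assume that V*_L, σ_L, ρ*_L and the congested slope s(ρ_H) := V*_L(ρ_H) σ_L(ρ_H)/(ρ*_L(ρ_H) − σ_L(ρ_H)) are all nonincreasing functions of ρ_H on [0, ρ_H^max]. Then for any 0 ≤ ρ_H1 ≤ ρ_H2 ≤ ρ_H^max and any ρ_L with 0 < ρ_L ≤ ρ*_L(ρ_H2), one has v_L(ρ_L, ρ_H1) ≥ v_L(ρ_L, ρ_H2) and f_L(ρ_L, ρ_H1) ≥ f_L(ρ_L, ρ_H2); that is, both the car speed and the car flux are nonincreasing with respect to the truck density (properties (L2) and (L5) with respect to ρ_H). -/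
/-- Car speed with parameters `Vs = V*_L(ρ_H)`, `σ = σ_L(ρ_H)`, `ρs = ρ*_L(ρ_H)`. -/
noncomputable def vL (Vs σ ρs ρ : ℝ) : ℝ :=
  if ρ ≤ σ then Vs else (Vs * σ / (ρs - σ)) * (ρs / ρ - 1)

/-- Car flux `f_L = ρ_L · v_L` (which vanishes at `ρ_L = 0`). -/
noncomputable def fL (Vs σ ρs ρ : ℝ) : ℝ := ρ * vL Vs σ ρs ρ

lemma vL_mono_aux (V1 V2 σ1 σ2 ρs1 ρs2 ρ : ℝ)
    (hV2 : 0 < V2) (hσ2 : 0 < σ2) (hσ1 : 0 < σ1)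
    (hσρs2 : σ2 < ρs2) (hσρs1 : σ1 < ρs1)
    (hV : V2 ≤ V1) (hσ : σ2 ≤ σ1) (hρs : ρs2 ≤ ρs1)
    (hs : V2 * σ2 / (ρs2 - σ2) ≤ V1 * σ1 / (ρs1 - σ1))
    (hρ0 : 0 < ρ) (hρ : ρ ≤ ρs2) :
    vL V2 σ2 ρs2 ρ ≤ vL V1 σ1 ρs1 ρ := by
  have hd2 : 0 < ρs2 - σ2 := by linarith
  have hd1 : 0 < ρs1 - σ1 := by linarith
  have hV1 : 0 < V1 := lt_of_lt_of_le hV2 hV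
  have hcong2 : ¬ ρ ≤ σ2 → V2 * σ2 / (ρs2 - σ2) * (ρs2 / ρ - 1) ≤ V2 := by
    intro h
    push_neg at h
    rw [div_mul_eq_mul_div, div_le_iff₀ hd2]
    have h1 : ρs2 / ρ - 1 = (ρs2 - ρ) / ρ := by field_simp
    rw [h1, ← mul_div_assoc, div_le_iff₀ hρ0]
    nlinarith [mul_nonneg (mul_nonneg hV2.le (by linarith : (0:ℝ) ≤ ρs2))
      (by linarith : (0:ℝ) ≤ ρ - σ2)]
  unfold vL
  split_ifs with h2 h1 h1
  · exact hV
  · exact absurd (le_trans h2 hσ) h1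
  · exact le_trans (hcong2 h2) hV
  · have hnn : 0 ≤ ρs2 / ρ - 1 := by
      rw [sub_nonneg, le_div_iff₀ hρ0]; linarith
    have hfac : ρs2 / ρ - 1 ≤ ρs1 / ρ - 1 := by gcongr
    exact mul_le_mul hs hfac hnn (by positivity)

/-- properties (L2) and (L5) in `ρ_H`: if `V*_L`, `σ_L`,
`ρ*_L(ρ_H) = ρ_L^max − ρ_H/β` and the congested slope
`s(ρ_H) = V*_L(ρ_H)σ_L(ρ_H)/(ρ*_L(ρ_H) − σ_L(ρ_H))` are nonincreasing on
`[0, ρ_H^max]`, then both the car speed and the car flux are nonincreasing in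
the truck density. -/
theorem vL_fL_antitone_in_truckDensity
    (ρLmax β ρHmax : ℝ) (hρLmax : 0 < ρLmax) (hβ0 : 0 < β) (hβ1 : β < 1)
    (hρHmax : 0 < ρHmax) (hcond : 0 < ρLmax - ρHmax / β)
    (VsL σL : ℝ → ℝ)
    (hVs : ∀ ρH ∈ Set.Icc (0:ℝ) ρHmax, 0 < VsL ρH)
    (hσpos : ∀ ρH ∈ Set.Icc (0:ℝ) ρHmax, 0 < σL ρH)
    (hσlt : ∀ ρH ∈ Set.Icc (0:ℝ) ρHmax, σL ρH < ρLmax - ρH / β)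
    (hVsAnti : AntitoneOn VsL (Set.Icc 0 ρHmax))
    (hσAnti : AntitoneOn σL (Set.Icc 0 ρHmax))
    (hρsAnti : AntitoneOn (fun ρH => ρLmax - ρH / β) (Set.Icc 0 ρHmax))
    (hsAnti : AntitoneOn
      (fun ρH => VsL ρH * σL ρH / ((ρLmax - ρH / β) - σL ρH)) (Set.Icc 0 ρHmax))
    (ρH1 ρH2 : ℝ) (h1 : 0 ≤ ρH1) (h12 : ρH1 ≤ ρH2) (h2 : ρH2 ≤ ρHmax)
    (ρL : ℝ) (hρL0 : 0 < ρL) (hρL : ρL ≤ ρLmax - ρH2 / β) :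
    vL (VsL ρH2) (σL ρH2) (ρLmax - ρH2 / β) ρL ≤
      vL (VsL ρH1) (σL ρH1) (ρLmax - ρH1 / β) ρL ∧
    fL (VsL ρH2) (σL ρH2) (ρLmax - ρH2 / β) ρL ≤
      fL (VsL ρH1) (σL ρH1) (ρLmax - ρH1 / β) ρL := by
  have mem1 : ρH1 ∈ Set.Icc (0:ℝ) ρHmax := ⟨h1, le_trans h12 h2⟩
  have mem2 : ρH2 ∈ Set.Icc (0:ℝ) ρHmax := ⟨le_trans h1 h12, h2⟩
  have hv : vL (VsL ρH2) (σL ρH2) (ρLmax - ρH2 / β) ρL ≤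
      vL (VsL ρH1) (σL ρH1) (ρLmax - ρH1 / β) ρL := by
    apply vL_mono_aux
    · exact hVs ρH2 mem2
    · exact hσpos ρH2 mem2
    · exact hσpos ρH1 mem1
    · exact hσlt ρH2 mem2
    · exact hσlt ρH1 mem1
    · exact hVsAnti mem1 mem2 h12
    · exact hσAnti mem1 mem2 h12
    · exact hρsAnti mem1 mem2 h12
    · exact hsAnti mem1 mem2 h12
    · exact hρL0
    · exact hρL
  exact ⟨hv, by unfold fL; exact mul_le_mul_of_nonneg_left hv hρL0.le⟩
end

section
/- Let V^max > 0, τ_min > 0, T > 0, and let w, τ : [0, T] → ℝ be functions with w(t) ∈ [0, V^max] and τ(t) ≥ τ_min for all t. If V : [0, T] → ℝ is differentiable and satisfies the relaxation equation V̇(t) = (w(t) − V(t))/τ(t) for all t ∈ [0, T], and V(0) ∈ [0, V^max], then V(t) ∈ [0, V^max] for all t ∈ [0, T]. In particular, along any solution of the Follow-the-Leader truck model with acceleration (v^ZZ(Δ_k) − V_k)/τ (τ ∈ {τ_acc, τ_dec}), each truck's velocity remains in the admissible interval [0, V_H^max] if it starts there. -/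
lemma relax_upper (B τmin T : ℝ) (hτmin : 0 < τmin)
    (g τ f : ℝ → ℝ)
    (hg : ∀ t ∈ Set.Icc (0:ℝ) T, g t ≤ B)
    (hτ : ∀ t ∈ Set.Icc (0:ℝ) T, τmin ≤ τ t)
    (hODE : ∀ t ∈ Set.Icc (0:ℝ) T, HasDerivAt f ((g t - f t) / τ t) t)
    (h0 : f 0 ≤ B) :
    ∀ t ∈ Set.Icc (0:ℝ) T, f t ≤ B := by
  intro t0 ht0
  by_contra hcon
  push_neg at hcon
  obtain ⟨ht00, ht0T⟩ := ht0
  have hsub : Set.Icc (0:ℝ) t0 ⊆ Set.Icc 0 T :=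
    Set.Icc_subset_Icc le_rfl ht0T
  have hcont : ContinuousOn f (Set.Icc 0 t0) := fun x hx =>
    ((hODE x (hsub hx)).continuousAt).continuousWithinAt
  set S : Set ℝ := Set.Icc 0 t0 ∩ f ⁻¹' Set.Iic B with hSdef
  have hSclosed : IsClosed S :=
    hcont.preimage_isClosed_of_isClosed isClosed_Icc isClosed_Iic
  have h0S : (0:ℝ) ∈ S := ⟨⟨le_rfl, ht00⟩, h0⟩
  have hSne : S.Nonempty := ⟨0, h0S⟩
  have hSbdd : BddAbove S := ⟨t0, fun x hx => hx.1.2⟩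
  set s := sSup S with hs
  have hsS : s ∈ S := hSclosed.csSup_mem hSne hSbdd
  have hst0 : s ≤ t0 := hsS.1.2
  have hfsB : f s ≤ B := hsS.2
  have hslt : s < t0 := lt_of_le_of_ne hst0 (fun h => hcon.not_ge (h ▸ hfsB))
  have hpos : ∀ x ∈ Set.Ioo s t0, B < f x := by
    intro x hx
    by_contra hxB
    push_neg at hxB
    have : x ∈ S := ⟨⟨le_trans hsS.1.1 hx.1.le, hx.2.le⟩, hxB⟩
    exact absurd (le_csSup hSbdd this) (not_le.mpr hx.1)
  have hmono : AntitoneOn f (Set.Icc s t0) := by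
    apply antitoneOn_of_deriv_nonpos (convex_Icc s t0)
      (hcont.mono (Set.Icc_subset_Icc hsS.1.1 le_rfl))
    · intro x hx
      rw [interior_Icc] at hx
      exact ((hODE x (hsub ⟨le_trans hsS.1.1 hx.1.le, hx.2.le⟩)).differentiableAt).differentiableWithinAt
    · intro x hx
      rw [interior_Icc] at hx
      have hxT : x ∈ Set.Icc (0:ℝ) T := hsub ⟨le_trans hsS.1.1 hx.1.le, hx.2.le⟩
      rw [(hODE x hxT).deriv]
      apply div_nonpos_of_nonpos_of_nonneg
      · linarith [hg x hxT, hpos x hx]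
      · linarith [hτ x hxT]
  have := hmono ⟨le_rfl, hslt.le⟩ ⟨hslt.le, le_rfl⟩ hslt.le
  linarith

/-- invariance of the admissible velocity interval under
relaxation dynamics. If `V̇(t) = (w(t) − V(t))/τ(t)` on `[0, T]` with targets
`w(t) ∈ [0, V^max]` and relaxation times `τ(t) ≥ τ_min > 0`, and
`V(0) ∈ [0, V^max]`, then `V(t) ∈ [0, V^max]` for all `t ∈ [0, T]`. This applies
in particular to each truck velocity in the Follow-the-Leader model, where
`w = v^ZZ(Δ_k) ∈ [0, V_H^max]` and `τ ∈ {τ_acc, τ_dec}`. -/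
theorem velocity_interval_invariant
    (Vmax τmin T : ℝ) (hVmax : 0 < Vmax) (hτmin : 0 < τmin) (hT : 0 < T)
    (w τ V : ℝ → ℝ)
    (hw : ∀ t ∈ Set.Icc (0:ℝ) T, w t ∈ Set.Icc 0 Vmax)
    (hτ : ∀ t ∈ Set.Icc (0:ℝ) T, τmin ≤ τ t)
    (hODE : ∀ t ∈ Set.Icc (0:ℝ) T, HasDerivAt V ((w t - V t) / τ t) t)
    (hV0 : V 0 ∈ Set.Icc 0 Vmax) :
    ∀ t ∈ Set.Icc (0:ℝ) T, V t ∈ Set.Icc 0 Vmax := by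
  intro t ht
  constructor
  · -- lower bound via -V
    have hneg := relax_upper 0 τmin T hτmin (fun t => -(w t)) τ (fun t => -(V t))
      (fun x hx => by simpa using (hw x hx).1) hτ
      (fun x hx => by
        have := (hODE x hx).neg
        exact this.congr_deriv (by ring))
      (by simpa using hV0.1) t ht
    simpa using hneg
  · exact relax_upper Vmax τmin T hτmin w τ V (fun x hx => (hw x hx).2) hτ hODE hV0.2 t ht
end
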